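/- For all integers j, i with 0 ≤ j ≤ α₄ − 1 and 0 ≤ i ≤ α₃ − 1 one has the identity (((α₄−1)i+j)α₂+1)·n₂ + (α₄−1−j)·n₄ = (iα₁ + ((α₄−1)i+j+1)α₂₁ + 1)·n₁ + (α₃−1−i)·n₃. (Equivalently, the binomial g_{j,i} = X₂^{((α₄−1)i+j)α₂+1}X₄^{α₄−(j+1)} − X₁^{iα₁+((α₄−1)i+j+1)α₂₁+1}X₃^{α₃−(i+1)} lies in the toric ideal I_S, i.e., in the kernel of the ring homomorphism K[X₁,X₂,X₃,X₄] → K[t] sending Xᵢ ↦ t^{nᵢ}.) -/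

import Mathlib

/-!
The relations for all `g_{j,i}` follow from three basic ones,
`n₂ + (α₄ - 1) n₄ = (α₂₁ + 1) n₁ + (α₃ - 1) n₃` (the case `i = j = 0`), `α₂ n₂ = α₂₁ n₁ + n₄` and
`α₁ n₁ = (α₄ - 1) n₄ + n₃`. With `k = (α₄ - 1) i + j`, the second trades the `k α₂` copies of `n₂`
for `k α₂₁` copies of `n₁` and `k` of `n₄`; the first absorbs `α₄ - 1` copies of `n₄`; the third
turns the remaining `i (α₄ - 1)` copies of `n₄`, together with `i` copies of `n₃`, into `i α₁`
copies of `n₁`.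
-/

theorem relation_family_of_basic_relations {R : Type*} [CommSemiring R]
    {a₁ a₂ a₂₁ p q i j i' j' n₁ n₂ n₃ n₄ : R}
    (h₀ : n₂ + p * n₄ = (a₂₁ + 1) * n₁ + q * n₃) (h₁ : a₂ * n₂ = a₂₁ * n₁ + n₄)
    (h₂ : a₁ * n₁ = p * n₄ + n₃) (hp : j + j' = p) (hq : i + i' = q) :
    ((p * i + j) * a₂ + 1) * n₂ + j' * n₄ =
      (i * a₁ + (p * i + j + 1) * a₂₁ + 1) * n₁ + i' * n₃ := by
  calc ((p * i + j) * a₂ + 1) * n₂ + j' * n₄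
      = n₂ + (p * i + j) * (a₂ * n₂) + j' * n₄ := by ring
    _ = (n₂ + p * n₄) + (p * i + j) * a₂₁ * n₁ + i * (p * n₄) := by
      rw [h₁, ← hp]; ring
    _ = (a₂₁ + 1) * n₁ + i' * n₃ + (p * i + j) * a₂₁ * n₁ + i * (p * n₄ + n₃) := by
      rw [h₀, ← hq]; ring
    _ = (i * a₁ + (p * i + j + 1) * a₂₁ + 1) * n₁ + i' * n₃ := by rw [← h₂]; ring

namespace Komeda

variable (α₁ α₂ α₃ α₄ α₂₁ : ℕ)

def n₁ : ℕ := α₂ * α₃ * (α₄ - 1) + 1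

def n₂ : ℕ := α₂₁ * α₃ * α₄ + (α₁ - α₂₁ - 1) * (α₃ - 1) + α₃

def n₃ : ℕ := α₁ * α₄ + (α₁ - α₂₁ - 1) * (α₂ - 1) * (α₄ - 1) + 1 - α₄

def n₄ : ℕ := α₁ * α₂ * (α₃ - 1) + α₂₁ * (α₂ - 1) + α₂

variable {α₁ α₂ α₃ α₄ α₂₁}

theorem cast_n₁ (hα₄ : 0 < α₄) : (n₁ α₂ α₃ α₄ : ℤ) = α₂ * α₃ * (α₄ - 1) + 1 := by
  rw [n₁]
  push_cast [Nat.succ_le_of_lt hα₄]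
  ring

theorem cast_n₂ (hα₃ : 0 < α₃) (hα₂₁ : α₂₁ < α₁) :
    (n₂ α₁ α₃ α₄ α₂₁ : ℤ) = α₂₁ * α₃ * α₄ + (α₁ - α₂₁ - 1) * (α₃ - 1) + α₃ := by
  rw [n₂]
  push_cast [Nat.sub_sub, Nat.succ_le_of_lt hα₂₁, Nat.succ_le_of_lt hα₃]
  ring

theorem cast_n₃ (hα₂ : 0 < α₂) (hα₄ : 0 < α₄) (hα₂₁ : α₂₁ < α₁) :
    (n₃ α₁ α₂ α₄ α₂₁ : ℤ) = α₁ * α₄ + (α₁ - α₂₁ - 1) * (α₂ - 1) * (α₄ - 1) + 1 - α₄ := by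
  have hα₄_le : α₄ ≤ α₁ * α₄ + (α₁ - α₂₁ - 1) * (α₂ - 1) * (α₄ - 1) + 1 :=
    le_add_right (le_add_right (Nat.le_mul_of_pos_left α₄ (by omega)))
  rw [n₃, Nat.cast_sub hα₄_le]
  push_cast [Nat.sub_sub, Nat.succ_le_of_lt hα₂₁, Nat.succ_le_of_lt hα₂,
    Nat.succ_le_of_lt hα₄]
  ring

theorem cast_n₄ (hα₂ : 0 < α₂) (hα₃ : 0 < α₃) :
    (n₄ α₁ α₂ α₃ α₂₁ : ℤ) = α₁ * α₂ * (α₃ - 1) + α₂₁ * (α₂ - 1) + α₂ := by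
  rw [n₄]
  push_cast [Nat.succ_le_of_lt hα₂, Nat.succ_le_of_lt hα₃]
  ring

theorem n₂_add_mul_n₄ (hα₂ : 0 < α₂) (hα₃ : 0 < α₃) (hα₄ : 0 < α₄) (hα₂₁ : α₂₁ < α₁) :
    n₂ α₁ α₃ α₄ α₂₁ + (α₄ - 1) * n₄ α₁ α₂ α₃ α₂₁ =
      (α₂₁ + 1) * n₁ α₂ α₃ α₄ + (α₃ - 1) * n₃ α₁ α₂ α₄ α₂₁ := by
  zify [Nat.succ_le_of_lt hα₃, Nat.succ_le_of_lt hα₄]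
  rw [cast_n₁ hα₄, cast_n₂ hα₃ hα₂₁, cast_n₃ hα₂ hα₄ hα₂₁, cast_n₄ hα₂ hα₃]
  ring

theorem mul_n₂ (hα₂ : 0 < α₂) (hα₃ : 0 < α₃) (hα₄ : 0 < α₄) (hα₂₁ : α₂₁ < α₁) :
    α₂ * n₂ α₁ α₃ α₄ α₂₁ = α₂₁ * n₁ α₂ α₃ α₄ + n₄ α₁ α₂ α₃ α₂₁ := by
  zify
  rw [cast_n₁ hα₄, cast_n₂ hα₃ hα₂₁, cast_n₄ hα₂ hα₃]
  ring

theorem mul_n₁ (hα₂ : 0 < α₂) (hα₃ : 0 < α₃) (hα₄ : 0 < α₄) (hα₂₁ : α₂₁ < α₁) :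
    α₁ * n₁ α₂ α₃ α₄ = (α₄ - 1) * n₄ α₁ α₂ α₃ α₂₁ + n₃ α₁ α₂ α₄ α₂₁ := by
  zify [Nat.succ_le_of_lt hα₄]
  rw [cast_n₁ hα₄, cast_n₃ hα₂ hα₄ hα₂₁, cast_n₄ hα₂ hα₃]
  ring

end Komeda

theorem gji_in_ideal_general (α₁ α₂ α₃ α₄ α₂₁ : ℕ)
    (h1 : 2 ≤ α₁) (h2 : 2 ≤ α₂) (h3 : 2 ≤ α₃) (h4 : 2 ≤ α₄)
    (h21' : α₂₁ ≤ α₁ - 2) :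
    ∀ j i : ℕ, j ≤ α₄ - 1 → i ≤ α₃ - 1 →
      (((α₄ - 1) * i + j) * α₂ + 1) *
          (α₂₁ * α₃ * α₄ + (α₁ - α₂₁ - 1) * (α₃ - 1) + α₃)
        + (α₄ - 1 - j) * (α₁ * α₂ * (α₃ - 1) + α₂₁ * (α₂ - 1) + α₂) =
      (i * α₁ + ((α₄ - 1) * i + j + 1) * α₂₁ + 1) * (α₂ * α₃ * (α₄ - 1) + 1)
        + (α₃ - 1 - i) *
            (α₁ * α₄ + (α₁ - α₂₁ - 1) * (α₂ - 1) * (α₄ - 1) + 1 - α₄) := by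
  intro j i hj hi
  have hα₂ : 0 < α₂ := by omega
  have hα₃ : 0 < α₃ := by omega
  have hα₄ : 0 < α₄ := by omega
  have hα₂₁ : α₂₁ < α₁ := by omega
  exact relation_family_of_basic_relations (Komeda.n₂_add_mul_n₄ hα₂ hα₃ hα₄ hα₂₁)
    (Komeda.mul_n₂ hα₂ hα₃ hα₄ hα₂₁) (Komeda.mul_n₁ hα₂ hα₃ hα₄ hα₂₁)
    (Nat.add_sub_cancel' hj) (Nat.add_sub_cancel' hi)

/-- the binomials `g_{j,i}` lie in the toric ideal, i.e.
`(((α₄−1)i+j)α₂+1)·n₂ + (α₄−1−j)·n₄ = (iα₁+((α₄−1)i+j+1)α₂₁+1)·n₁ + (α₃−1−i)·n₃`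
for all `0 ≤ j ≤ α₄ − 1` and `0 ≤ i ≤ α₃ − 1`. -/
theorem gji_in_ideal (α₁ α₂ α₃ α₄ α₂₁ : ℕ)
    (h1 : 2 ≤ α₁) (h2 : 2 ≤ α₂) (h3 : 2 ≤ α₃) (h4 : 2 ≤ α₄)
    (h21 : 1 ≤ α₂₁) (h21' : α₂₁ ≤ α₁ - 2) :
    ∀ j i : ℕ, j ≤ α₄ - 1 → i ≤ α₃ - 1 →
      (((α₄ - 1) * i + j) * α₂ + 1) *
          (α₂₁ * α₃ * α₄ + (α₁ - α₂₁ - 1) * (α₃ - 1) + α₃)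
        + (α₄ - 1 - j) * (α₁ * α₂ * (α₃ - 1) + α₂₁ * (α₂ - 1) + α₂) =
      (i * α₁ + ((α₄ - 1) * i + j + 1) * α₂₁ + 1) * (α₂ * α₃ * (α₄ - 1) + 1)
        + (α₃ - 1 - i) *
            (α₁ * α₄ + (α₁ - α₂₁ - 1) * (α₂ - 1) * (α₄ - 1) + 1 - α₄) :=
  gji_in_ideal_general α₁ α₂ α₃ α₄ α₂₁ h1 h2 h3 h4 h21'
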